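/- Nested DynaMO paths compose: for a composition of n affine layers, applying the coupled transformation with scalar a on the full path [1, n] and with scalar a' on a strict sub-path [i, j] with 1 < i ≤ j < n leaves the network output unchanged for every input. -/
import Mathlib


/-- Evaluate the composition of the first `n` affine layers:
layer `k` maps `x` to `(W k)ᵀ x + b k`. -/
def evalNet (d : ℕ) (W : ℕ → Matrix (Fin d) (Fin d) ℝ) (b : ℕ → Fin d → ℝ) :
    ℕ → (Fin d → ℝ) → (Fin d → ℝ)
  | 0, x => x
  | (k+1), x => (W k).transpose.mulVec (evalNet d W b k x) + b k

/-- Coupled transformation of the weights with scalar `a` on the path `(p, q)`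
(0-indexed): `W_p ↦ a·W_p`, `W_q ↦ (1/a)·W_q`. -/
noncomputable def coupledW (d : ℕ) (a : ℝ) (p q : ℕ) (W : ℕ → Matrix (Fin d) (Fin d) ℝ) :
    ℕ → Matrix (Fin d) (Fin d) ℝ :=
  fun m => ((if m = p then a else 1) * (if m = q then a⁻¹ else 1)) • W m

/-- Coupled transformation of the biases with scalar `a` on the path `(p, q)`:
`b_m ↦ a·b_m` for `p ≤ m < q`. -/
def coupledB (d : ℕ) (a : ℝ) (p q : ℕ) (b : ℕ → Fin d → ℝ) : ℕ → Fin d → ℝ :=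
  fun m => (if p ≤ m ∧ m < q then a else (1:ℝ)) • b m

set_option maxHeartbeats 1000000 in
/-- Nested DynaMO paths compose: applying the coupled transformation with
scalar `a` on the full path `[0, n−1]` and with scalar `a'` on a strict
sub-path `[p, q]` (with `0 < p ≤ q < n − 1`) leaves the network output
unchanged for every input. -/
theorem nested_obfuscation_pairs_compose (d n : ℕ)
    (W : ℕ → Matrix (Fin d) (Fin d) ℝ) (b : ℕ → Fin d → ℝ)
    (a a' : ℝ) (ha : a ≠ 0) (ha' : a' ≠ 0)
    (p q : ℕ) (hp : 0 < p) (hpq : p ≤ q) (hq : q < n - 1) :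
    ∀ x, evalNet d (coupledW d a' p q (coupledW d a 0 (n - 1) W))
        (coupledB d a' p q (coupledB d a 0 (n - 1) b)) n x = evalNet d W b n x := by

  have hn2 : 2 ≤ n := by omega
  set c : ℕ → ℝ := fun k =>
    (if 1 ≤ k ∧ k ≤ n - 1 then a else 1) * (if p + 1 ≤ k ∧ k ≤ q then a' else 1) with hc
  have key : ∀ k x, evalNet d (coupledW d a' p q (coupledW d a 0 (n - 1) W))
      (coupledB d a' p q (coupledB d a 0 (n - 1) b)) k x = c k • evalNet d W b k x := by
    intro k
    induction k with
    | zero =>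
      intro x
      have h0 : c 0 = 1 := by simp [hc]
      simp [evalNet, h0]
    | succ k ih =>
      intro x
      have hW : (coupledW d a' p q (coupledW d a 0 (n - 1) W)) k =
          (((if k = p then a' else 1) * (if k = q then a'⁻¹ else 1)) *
           ((if k = 0 then a else 1) * (if k = (n-1) then a⁻¹ else 1))) • W k := by
        simp [coupledW, smul_smul]
      have hB : (coupledB d a' p q (coupledB d a 0 (n - 1) b)) k =
          ((if p ≤ k ∧ k < q then a' else 1) * (if 0 ≤ k ∧ k < n - 1 then a else 1)) • b k := by
        simp [coupledB, smul_smul]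
      have hcoef : (((if k = p then a' else 1) * (if k = q then a'⁻¹ else 1)) *
           ((if k = 0 then a else 1) * (if k = (n-1) then a⁻¹ else 1))) * c k = c (k+1) := by
        simp only [hc]
        split_ifs <;> first | omega | ring1 | (simp [mul_inv_cancel₀, ha, ha']; done) | (simp [mul_inv_cancel₀, ha, ha', mul_comm, mul_assoc, mul_left_comm])
      have hbcoef : ((if p ≤ k ∧ k < q then a' else 1) * (if 0 ≤ k ∧ k < n - 1 then a else 1))
          = c (k+1) := by
        simp only [hc]
        split_ifs <;> first | omega | ring1
      simp only [evalNet]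
      rw [hW, hB, ih, Matrix.transpose_smul, Matrix.smul_mulVec, Matrix.mulVec_smul,
        smul_smul, hcoef, hbcoef, ← smul_add]
  intro x
  rw [key]
  have : c n = 1 := by
    simp only [hc]
    split_ifs <;> first | omega | ring1
  rw [this, one_smul]
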